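/- arXiv:1912.00072 — 2 statements merged into one kernel-verified Lean document; each statement's English description precedes it below -/
import Mathlib

section
/- Let α ≥ 0, β ∈ ℝ, γ ≥ 0, and let μ be a nonnegative Borel measure on ℝ∖{0} satisfying ∫_{ℝ∖{0}} min{|s|⁻¹, |s|⁻³} μ(ds) < ∞. Then for every z ∈ ℂ with Re z > 0 the integral in F(z) = αz² − iβz + γ + (1/π) ∫_{ℝ∖{0}} ( z/(z+is) + i·z·sign(s)/(1+|s|) ) μ(ds)/|s| converges absolutely, the function F so defined is holomorphic on the right half-plane {z : Re z > 0}, and Re(F(z)/z) ≥ 0 for every z with Re z > 0; that is, F is a Rogers function. -/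
open MeasureTheory Filter Set
open scoped ENNReal Topology

noncomputable section

/-- A *Rogers function*: holomorphic on the right half-plane, with `Re (F z / z) ≥ 0` there. -/
def IsRogersFunction (F : ℂ → ℂ) : Prop :=
  DifferentiableOn ℂ F {z : ℂ | 0 < z.re} ∧ ∀ z : ℂ, 0 < z.re → 0 ≤ (F z / z).re

/-- `Ψ` extends to a Rogers function: some Rogers function agrees with `Ψ` on `(0, ∞)`. -/
def ExtendsToRogersFunction (Ψ : ℝ → ℂ) : Prop :=
  ∃ F : ℂ → ℂ, IsRogersFunction F ∧ ∀ ξ : ℝ, 0 < ξ → F (ξ : ℂ) = Ψ ξ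

lemma measurable_realSign : Measurable Real.sign := by
  have h : Real.sign = fun r : ℝ => if r < 0 then (-1:ℝ) else if 0 < r then 1 else 0 := by
    funext r; rfl
  rw [h]
  exact Measurable.ite (measurableSet_lt measurable_id measurable_const) measurable_const
    (Measurable.ite (measurableSet_lt measurable_const measurable_id) measurable_const
      measurable_const)

/-- the integrand -/
def fint (z : ℂ) (s : ℝ) : ℂ :=
  (z / (z + Complex.I * (s : ℂ))
    + Complex.I * z * (Real.sign s : ℂ) / ((1 + |s| : ℝ) : ℂ)) / ((|s| : ℝ) : ℂ)

/-- its z-derivative -/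
def fint' (z : ℂ) (s : ℝ) : ℂ :=
  (Complex.I * (s : ℂ) / (z + Complex.I * (s : ℂ)) ^ 2
    + Complex.I * (Real.sign s : ℂ) / ((1 + |s| : ℝ) : ℂ)) / ((|s| : ℝ) : ℂ)

lemma aesm_fint (z : ℂ) (μ : Measure ℝ) : AEStronglyMeasurable (fint z) μ := by
  apply Measurable.aestronglyMeasurable
  unfold fint
  have h1 : Measurable fun s : ℝ => Complex.I * (s : ℂ) :=
    Complex.measurable_ofReal.const_mul _
  have h2 : Measurable fun s : ℝ => Complex.I * z * ((Real.sign s : ℝ) : ℂ) :=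
    (Complex.measurable_ofReal.comp measurable_realSign).const_mul _
  have h3 : Measurable fun s : ℝ => ((|s| : ℝ) : ℂ) :=
    Complex.measurable_ofReal.comp measurable_id.abs
  have h4 : Measurable fun s : ℝ => ((1 + |s| : ℝ) : ℂ) :=
    Complex.measurable_ofReal.comp (measurable_id.abs.const_add 1)
  exact ((measurable_const.div (h1.const_add z)).add (h2.div h4)).div h3

lemma aesm_fint' (z : ℂ) (μ : Measure ℝ) : AEStronglyMeasurable (fint' z) μ := by
  apply Measurable.aestronglyMeasurable
  unfold fint'
  have h1 : Measurable fun s : ℝ => Complex.I * (s : ℂ) :=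
    Complex.measurable_ofReal.const_mul _
  have hd : Measurable fun s : ℝ => (z + Complex.I * (s : ℂ)) ^ 2 :=
    (h1.const_add z).pow_const 2
  have h2 : Measurable fun s : ℝ => Complex.I * ((Real.sign s : ℝ) : ℂ) :=
    (Complex.measurable_ofReal.comp measurable_realSign).const_mul _
  have h3 : Measurable fun s : ℝ => ((|s| : ℝ) : ℂ) :=
    Complex.measurable_ofReal.comp measurable_id.abs
  have h4 : Measurable fun s : ℝ => ((1 + |s| : ℝ) : ℂ) :=
    Complex.measurable_ofReal.comp (measurable_id.abs.const_add 1)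
  exact ((h1.div hd).add (h2.div h4)).div h3

lemma re_add_I_mul (z : ℂ) (s : ℝ) : (z + Complex.I * (s : ℂ)).re = z.re := by
  simp

lemma add_I_mul_ne_zero (z : ℂ) (hz : 0 < z.re) (s : ℝ) : z + Complex.I * (s : ℂ) ≠ 0 := by
  intro h
  have := re_add_I_mul z s
  rw [h] at this
  simp at this
  linarith

lemma abs_realSign_le_one (s : ℝ) : |Real.sign s| ≤ 1 := by
  rcases lt_trichotomy s 0 with h | h | h
  · rw [Real.sign_of_neg h]; norm_num
  · rw [h, Real.sign_zero]; norm_num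
  · rw [Real.sign_of_pos h]; norm_num

lemma realSign_mul_self (s : ℝ) (hs : s ≠ 0) : Real.sign s * s = |s| := by
  rcases hs.lt_or_gt with h | h
  · rw [Real.sign_of_neg h, abs_of_neg h]; ring
  · rw [Real.sign_of_pos h, abs_of_pos h]; ring

lemma lb (r M : ℝ) (hr : 0 < r) (z : ℂ) (hzr : r ≤ z.re) (hzM : ‖z‖ ≤ M) (s : ℝ) :
    r / (1 + 2 * M) * max 1 |s| ≤ ‖z + Complex.I * (s : ℂ)‖ := by
  have hre : z.re ≤ ‖z‖ := by
    exact Complex.re_le_norm z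
  have hrM : r ≤ M := le_trans (le_trans hzr hre) hzM
  have hden : (0:ℝ) < 1 + 2 * M := by linarith
  have hnr : r ≤ ‖z + Complex.I * (s : ℂ)‖ := by
    have h1 : (z + Complex.I * (s : ℂ)).re ≤ ‖z + Complex.I * (s : ℂ)‖ := by
      exact Complex.re_le_norm _
    rw [re_add_I_mul] at h1
    linarith
  have htri : |s| - M ≤ ‖z + Complex.I * (s : ℂ)‖ := by
    have h1 : ‖(z + Complex.I * (s : ℂ)) - z‖ ≤ ‖z + Complex.I * (s : ℂ)‖ + ‖z‖ :=
      norm_sub_le _ _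
    have h2 : ‖(z + Complex.I * (s : ℂ)) - z‖ = |s| := by
      simp
    rw [h2] at h1
    linarith
  rcases le_total |s| (1 + 2 * M) with h | h
  · have hmax : max 1 |s| ≤ 1 + 2 * M := max_le (by linarith) h
    have h0 : 0 ≤ r / (1 + 2 * M) := le_of_lt (div_pos hr hden)
    calc r / (1 + 2 * M) * max 1 |s| ≤ r / (1 + 2 * M) * (1 + 2 * M) :=
          mul_le_mul_of_nonneg_left hmax h0
      _ = r := div_mul_cancel₀ r hden.ne'
      _ ≤ _ := hnr
  · have hmax : max 1 |s| = |s| := max_eq_right (by linarith)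
    rw [hmax]
    have hhalf : r / (1 + 2 * M) ≤ 1 / 2 := by
      rw [div_le_div_iff₀ hden (by norm_num)]
      linarith
    calc r / (1 + 2 * M) * |s| ≤ 1 / 2 * |s| :=
          mul_le_mul_of_nonneg_right hhalf (abs_nonneg s)
      _ ≤ |s| - M := by linarith
      _ ≤ _ := htri

lemma fint_eq (z : ℂ) (hz : 0 < z.re) (s : ℝ) (hs : s ≠ 0) :
    fint z s = z * (1 + Complex.I * (Real.sign s : ℂ) * z) /
      ((z + Complex.I * (s : ℂ)) * ((1 + |s| : ℝ) : ℂ) * ((|s| : ℝ) : ℂ)) := by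
  have hssC : ((Real.sign s : ℝ) : ℂ) * (s : ℂ) = ((|s| : ℝ) : ℂ) := by
    rw [← Complex.ofReal_mul, realSign_mul_self s hs]
  have hzs := add_I_mul_ne_zero z hz s
  have h1 : ((1 + |s| : ℝ) : ℂ) ≠ 0 :=
    Complex.ofReal_ne_zero.mpr (by positivity)
  unfold fint
  rw [div_add_div _ _ hzs h1, div_div]
  congr 1
  push_cast
  linear_combination (-z) * hssC
    + z * (s : ℂ) * ((Real.sign s : ℝ) : ℂ) * Complex.I_sq

lemma fint'_eq (z : ℂ) (hz : 0 < z.re) (s : ℝ) (hs : s ≠ 0) :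
    fint' z s = (Complex.I * (s : ℂ) + Complex.I * (Real.sign s : ℂ) * z ^ 2
        - 2 * ((|s| : ℝ) : ℂ) * z) /
      ((z + Complex.I * (s : ℂ)) ^ 2 * ((1 + |s| : ℝ) : ℂ) * ((|s| : ℝ) : ℂ)) := by
  have hssC : ((Real.sign s : ℝ) : ℂ) * (s : ℂ) = ((|s| : ℝ) : ℂ) := by
    rw [← Complex.ofReal_mul, realSign_mul_self s hs]
  have hzs := add_I_mul_ne_zero z hz s
  have h1 : ((1 + |s| : ℝ) : ℂ) ≠ 0 :=
    Complex.ofReal_ne_zero.mpr (by positivity)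
  unfold fint'
  rw [div_add_div _ _ (pow_ne_zero 2 hzs) h1, div_div]
  congr 1
  push_cast
  linear_combination (-(Complex.I * (s : ℂ) + 2 * z)) * hssC
    + (Complex.I * (s : ℂ) ^ 2 * ((Real.sign s : ℝ) : ℂ)
      + 2 * (s : ℂ) * z * ((Real.sign s : ℝ) : ℂ)) * Complex.I_sq

lemma minmax (s : ℝ) (hs : s ≠ 0) :
    ((max 1 |s|) ^ 2 * |s|)⁻¹ ≤ min |s|⁻¹ ((|s| ^ 3)⁻¹) := by
  have h0 : 0 < |s| := abs_pos.mpr hs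
  have hm1 : (1:ℝ) ≤ max 1 |s| := le_max_left _ _
  have hm2 : |s| ≤ max 1 |s| := le_max_right _ _
  have hsq : 1 * 1 ≤ max 1 |s| * max 1 |s| :=
    mul_le_mul hm1 hm1 zero_le_one (by linarith)
  have hsq2 : |s| ^ 2 ≤ (max 1 |s|) ^ 2 := by nlinarith
  refine le_min ?_ ?_
  · apply inv_anti₀ h0
    nlinarith
  · apply inv_anti₀ (by positivity)
    nlinarith [mul_le_mul_of_nonneg_right hsq2 h0.le]

lemma norm_den_aux (s : ℝ) : ‖((1 + |s| : ℝ) : ℂ)‖ = 1 + |s| := by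
  rw [Complex.norm_real, Real.norm_eq_abs, abs_of_nonneg (by positivity)]

lemma norm_abs_aux (s : ℝ) : ‖((|s| : ℝ) : ℂ)‖ = |s| := by
  rw [Complex.norm_real, Real.norm_eq_abs, abs_abs]

lemma max_le_one_add (s : ℝ) : max 1 |s| ≤ 1 + |s| :=
  max_le (by linarith [abs_nonneg s]) (by linarith [abs_nonneg s])

lemma norm_fint_le (r M : ℝ) (hr : 0 < r) (z : ℂ) (hzr : r ≤ z.re) (hzM : ‖z‖ ≤ M)
    (s : ℝ) (hs : s ≠ 0) :
    ‖fint z s‖ ≤ (M * (1 + M) * ((1 + 2 * M) / r)) * min |s|⁻¹ ((|s| ^ 3)⁻¹) := by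
  have hz : 0 < z.re := lt_of_lt_of_le hr hzr
  have hM : 0 < M := lt_of_lt_of_le hr (hzr.trans (Complex.re_le_norm z) |>.trans hzM)
  have h0 : 0 < |s| := abs_pos.mpr hs
  have hm1 : (1:ℝ) ≤ max 1 |s| := le_max_left _ _
  have hden : (0:ℝ) < 1 + 2 * M := by linarith
  set c := r / (1 + 2 * M) with hc
  have hc0 : 0 < c := div_pos hr hden
  rw [fint_eq z hz s hs, norm_div]
  have hnum : ‖z * (1 + Complex.I * (Real.sign s : ℂ) * z)‖ ≤ M * (1 + M) := by
    rw [norm_mul]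
    have h1 : ‖(1:ℂ) + Complex.I * (Real.sign s : ℂ) * z‖ ≤ 1 + M := by
      calc ‖(1:ℂ) + Complex.I * (Real.sign s : ℂ) * z‖
          ≤ ‖(1:ℂ)‖ + ‖Complex.I * (Real.sign s : ℂ) * z‖ := norm_add_le _ _
        _ = 1 + |Real.sign s| * ‖z‖ := by
            rw [norm_one, norm_mul, norm_mul, Complex.norm_I, one_mul,
              Complex.norm_real, Real.norm_eq_abs]
        _ ≤ 1 + 1 * M := by
            have := abs_realSign_le_one s
            have h2 : |Real.sign s| * ‖z‖ ≤ 1 * M :=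
              mul_le_mul this hzM (norm_nonneg z) zero_le_one
            linarith
        _ = 1 + M := by ring
    exact mul_le_mul hzM h1 (norm_nonneg _) hM.le
  have hdenom : c * (max 1 |s|) ^ 2 * |s| ≤
      ‖(z + Complex.I * (s : ℂ)) * ((1 + |s| : ℝ) : ℂ) * ((|s| : ℝ) : ℂ)‖ := by
    rw [norm_mul, norm_mul, norm_den_aux, norm_abs_aux]
    have h1 := lb r M hr z hzr hzM s
    have h2 := max_le_one_add s
    calc c * (max 1 |s|) ^ 2 * |s| = (c * max 1 |s|) * (max 1 |s|) * |s| := by ring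
      _ ≤ ‖z + Complex.I * (s : ℂ)‖ * (1 + |s|) * |s| := by
          apply mul_le_mul_of_nonneg_right _ h0.le
          apply mul_le_mul h1 h2 (by linarith) (norm_nonneg _)
  have hdpos : 0 < c * (max 1 |s|) ^ 2 * |s| := by positivity
  calc ‖z * (1 + Complex.I * (Real.sign s : ℂ) * z)‖ /
        ‖(z + Complex.I * (s : ℂ)) * ((1 + |s| : ℝ) : ℂ) * ((|s| : ℝ) : ℂ)‖
      ≤ (M * (1 + M)) / (c * (max 1 |s|) ^ 2 * |s|) :=
        div_le_div₀ (by positivity) hnum hdpos hdenom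
    _ = (M * (1 + M) * ((1 + 2 * M) / r)) * ((max 1 |s|) ^ 2 * |s|)⁻¹ := by
        rw [hc]; field_simp
    _ ≤ (M * (1 + M) * ((1 + 2 * M) / r)) * min |s|⁻¹ ((|s| ^ 3)⁻¹) := by
        apply mul_le_mul_of_nonneg_left (minmax s hs) (by positivity)

lemma norm_fint'_le (r M : ℝ) (hr : 0 < r) (z : ℂ) (hzr : r ≤ z.re) (hzM : ‖z‖ ≤ M)
    (s : ℝ) (hs : s ≠ 0) :
    ‖fint' z s‖ ≤ ((1 + M) ^ 2 * ((1 + 2 * M) / r) ^ 2) * min |s|⁻¹ ((|s| ^ 3)⁻¹) := by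
  have hz : 0 < z.re := lt_of_lt_of_le hr hzr
  have hM : 0 < M := lt_of_lt_of_le hr (hzr.trans (Complex.re_le_norm z) |>.trans hzM)
  have h0 : 0 < |s| := abs_pos.mpr hs
  have hm1 : (1:ℝ) ≤ max 1 |s| := le_max_left _ _
  have hm2 : |s| ≤ max 1 |s| := le_max_right _ _
  have hden : (0:ℝ) < 1 + 2 * M := by linarith
  set c := r / (1 + 2 * M) with hc
  have hc0 : 0 < c := div_pos hr hden
  rw [fint'_eq z hz s hs, norm_div]
  have hnum : ‖Complex.I * (s : ℂ) + Complex.I * (Real.sign s : ℂ) * z ^ 2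
      - 2 * ((|s| : ℝ) : ℂ) * z‖ ≤ (1 + M) ^ 2 * max 1 |s| := by
    have h1 : ‖Complex.I * (s : ℂ) + Complex.I * (Real.sign s : ℂ) * z ^ 2
        - 2 * ((|s| : ℝ) : ℂ) * z‖
        ≤ |s| + M ^ 2 + 2 * |s| * M := by
      calc ‖Complex.I * (s : ℂ) + Complex.I * (Real.sign s : ℂ) * z ^ 2
            - 2 * ((|s| : ℝ) : ℂ) * z‖
          ≤ ‖Complex.I * (s : ℂ) + Complex.I * (Real.sign s : ℂ) * z ^ 2‖
            + ‖2 * ((|s| : ℝ) : ℂ) * z‖ := norm_sub_le _ _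
        _ ≤ ‖Complex.I * (s : ℂ)‖ + ‖Complex.I * (Real.sign s : ℂ) * z ^ 2‖
            + ‖2 * ((|s| : ℝ) : ℂ) * z‖ := by
            have := norm_add_le (Complex.I * (s : ℂ))
              (Complex.I * (Real.sign s : ℂ) * z ^ 2)
            linarith
        _ ≤ |s| + M ^ 2 + 2 * |s| * M := by
            have e1 : ‖Complex.I * (s : ℂ)‖ = |s| := by
              rw [norm_mul, Complex.norm_I, one_mul, Complex.norm_real, Real.norm_eq_abs]
            have e2 : ‖Complex.I * (Real.sign s : ℂ) * z ^ 2‖ ≤ M ^ 2 := by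
              rw [norm_mul, norm_mul, Complex.norm_I, one_mul, Complex.norm_real,
                Real.norm_eq_abs, norm_pow]
              have ha := abs_realSign_le_one s
              have hb : ‖z‖ ^ 2 ≤ M ^ 2 := by nlinarith [norm_nonneg z]
              nlinarith [abs_nonneg (Real.sign s), norm_nonneg z, sq_nonneg ‖z‖]
            have e3 : ‖(2 : ℂ) * ((|s| : ℝ) : ℂ) * z‖ ≤ 2 * |s| * M := by
              rw [norm_mul, norm_mul, Complex.norm_real, Real.norm_eq_abs, abs_abs]
              have : ‖(2:ℂ)‖ = 2 := by norm_num
              rw [this]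
              nlinarith [norm_nonneg z]
            linarith
    have h2 : |s| + M ^ 2 + 2 * |s| * M ≤ (1 + M) ^ 2 * max 1 |s| := by nlinarith
    linarith
  have hdenom : c ^ 2 * (max 1 |s|) ^ 3 * |s| ≤
      ‖(z + Complex.I * (s : ℂ)) ^ 2 * ((1 + |s| : ℝ) : ℂ) * ((|s| : ℝ) : ℂ)‖ := by
    rw [norm_mul, norm_mul, norm_pow, norm_den_aux, norm_abs_aux]
    have h1 := lb r M hr z hzr hzM s
    have h2 := max_le_one_add s
    have h3 : (c * max 1 |s|) ^ 2 ≤ ‖z + Complex.I * (s : ℂ)‖ ^ 2 := by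
      apply pow_le_pow_left₀ (by positivity) h1
    calc c ^ 2 * (max 1 |s|) ^ 3 * |s| = ((c * max 1 |s|) ^ 2 * (max 1 |s|)) * |s| := by ring
      _ ≤ (‖z + Complex.I * (s : ℂ)‖ ^ 2 * (1 + |s|)) * |s| := by
          apply mul_le_mul_of_nonneg_right _ h0.le
          apply mul_le_mul h3 h2 (by linarith) (by positivity)
  have hdpos : 0 < c ^ 2 * (max 1 |s|) ^ 3 * |s| := by positivity
  calc ‖Complex.I * (s : ℂ) + Complex.I * (Real.sign s : ℂ) * z ^ 2
        - 2 * ((|s| : ℝ) : ℂ) * z‖ /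
        ‖(z + Complex.I * (s : ℂ)) ^ 2 * ((1 + |s| : ℝ) : ℂ) * ((|s| : ℝ) : ℂ)‖
      ≤ ((1 + M) ^ 2 * max 1 |s|) / (c ^ 2 * (max 1 |s|) ^ 3 * |s|) :=
        div_le_div₀ (by positivity) hnum hdpos hdenom
    _ = ((1 + M) ^ 2 * ((1 + 2 * M) / r) ^ 2) * ((max 1 |s|) ^ 2 * |s|)⁻¹ := by
        rw [hc]; field_simp
    _ ≤ ((1 + M) ^ 2 * ((1 + 2 * M) / r) ^ 2) * min |s|⁻¹ ((|s| ^ 3)⁻¹) := by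
        apply mul_le_mul_of_nonneg_left (minmax s hs) (by positivity)

lemma integrable_minfun (μ : Measure ℝ)
    (hμint : (∫⁻ s : ℝ, ENNReal.ofReal (min |s|⁻¹ (|s| ^ 3)⁻¹) ∂μ) < ⊤) :
    Integrable (fun s : ℝ => min |s|⁻¹ ((|s| ^ 3)⁻¹)) μ := by
  constructor
  · apply Measurable.aestronglyMeasurable
    exact (measurable_id.abs.inv).min ((measurable_id.abs.pow_const 3).inv)
  · rw [hasFiniteIntegral_iff_ofReal]
    · exact hμint
    · filter_upwards with s
      refine le_min (by positivity) (by positivity)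

lemma ae_ne_zero (μ : Measure ℝ) (hμ0 : μ ({0} : Set ℝ) = 0) : ∀ᵐ s ∂μ, s ≠ 0 := by
  rw [ae_iff]
  simpa using hμ0

lemma integrable_fint (μ : Measure ℝ) (hμ0 : μ ({0} : Set ℝ) = 0)
    (hμint : (∫⁻ s : ℝ, ENNReal.ofReal (min |s|⁻¹ (|s| ^ 3)⁻¹) ∂μ) < ⊤)
    (z : ℂ) (hz : 0 < z.re) : Integrable (fint z) μ := by
  apply Integrable.mono'
    (((integrable_minfun μ hμint).const_mul
      (‖z‖ * (1 + ‖z‖) * ((1 + 2 * ‖z‖) / z.re)))) (aesm_fint z μ)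
  filter_upwards [ae_ne_zero μ hμ0] with s hs
  exact norm_fint_le z.re ‖z‖ hz z le_rfl le_rfl s hs

lemma hasDerivAt_fint (z : ℂ) (hz : 0 < z.re) (s : ℝ) :
    HasDerivAt (fun w => fint w s) (fint' z s) z := by
  have hzs := add_I_mul_ne_zero z hz s
  have h1 : HasDerivAt (fun w : ℂ => w / (w + Complex.I * (s : ℂ)))
      (Complex.I * (s : ℂ) / (z + Complex.I * (s : ℂ)) ^ 2) z := by
    have h := (hasDerivAt_id z).div ((hasDerivAt_id z).add_const (Complex.I * (s : ℂ))) hzs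
    refine h.congr_deriv ?_
    simp only [id]; ring
  have h2 : HasDerivAt
      (fun w : ℂ => Complex.I * w * ((Real.sign s : ℝ) : ℂ) / ((1 + |s| : ℝ) : ℂ))
      (Complex.I * ((Real.sign s : ℝ) : ℂ) / ((1 + |s| : ℝ) : ℂ)) z := by
    have h := ((((hasDerivAt_id z).const_mul Complex.I).mul_const
      ((Real.sign s : ℝ) : ℂ)).div_const ((1 + |s| : ℝ) : ℂ))
    refine h.congr_deriv ?_
    ring
  exact (h1.add h2).div_const ((|s| : ℝ) : ℂ)

lemma diff_integral (μ : Measure ℝ) (hμ0 : μ ({0} : Set ℝ) = 0)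
    (hμint : (∫⁻ s : ℝ, ENNReal.ofReal (min |s|⁻¹ (|s| ^ 3)⁻¹) ∂μ) < ⊤) :
    DifferentiableOn ℂ (fun z => ∫ s, fint z s ∂μ) {z : ℂ | 0 < z.re} := by
  intro z₀ hz₀
  simp only [mem_setOf_eq] at hz₀
  set r : ℝ := z₀.re / 2 with hrdef
  set M : ℝ := ‖z₀‖ + z₀.re / 2 with hMdef
  have hr : 0 < r := by positivity
  have hball : ∀ z ∈ Metric.ball z₀ r, r ≤ z.re ∧ ‖z‖ ≤ M := by
    intro z hzb
    rw [Metric.mem_ball, dist_eq_norm] at hzb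
    constructor
    · have h1 : |(z - z₀).re| ≤ ‖z - z₀‖ := by
        exact Complex.abs_re_le_norm _
      rw [Complex.sub_re] at h1
      have h2 := abs_le.mp h1
      have := h2.1
      simp only [hrdef]
      linarith [hzb.le]
    · have h1 : ‖z‖ ≤ ‖z₀‖ + ‖z - z₀‖ := by
        have := norm_add_le z₀ (z - z₀)
        simpa using this
      simp only [hMdef]
      linarith [hzb.le]
  have key := hasDerivAt_integral_of_dominated_loc_of_deriv_le (μ := μ)
    (F := fun z s => fint z s) (F' := fun z s => fint' z s)
    (bound := fun s => ((1 + M) ^ 2 * ((1 + 2 * M) / r) ^ 2) * min |s|⁻¹ ((|s| ^ 3)⁻¹))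
    (Metric.ball_mem_nhds z₀ hr)
    (Eventually.of_forall fun z => aesm_fint z μ)
    (integrable_fint μ hμ0 hμint z₀ hz₀)
    (aesm_fint' z₀ μ)
    ?_ ?_ ?_
  · exact key.2.differentiableAt.differentiableWithinAt
  · filter_upwards [ae_ne_zero μ hμ0] with s hs
    intro z hzb
    exact norm_fint'_le r M hr z (hball z hzb).1 (hball z hzb).2 s hs
  · exact (integrable_minfun μ hμint).const_mul _
  · filter_upwards with s
    intro z hzb
    have hzre : 0 < z.re := lt_of_lt_of_le hr (hball z hzb).1
    exact hasDerivAt_fint z hzre s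

lemma re_fint_div_nonneg (z : ℂ) (hz : 0 < z.re) (s : ℝ) (hs : s ≠ 0) :
    0 ≤ (fint z s / z).re := by
  have hz0 : z ≠ 0 := by
    intro h; rw [h] at hz; simp at hz
  have hzs := add_I_mul_ne_zero z hz s
  have h1 : ((1 + |s| : ℝ) : ℂ) ≠ 0 := Complex.ofReal_ne_zero.mpr (by positivity)
  have h2 : ((|s| : ℝ) : ℂ) ≠ 0 := Complex.ofReal_ne_zero.mpr (abs_ne_zero.mpr hs)
  have key : fint z s / z =
      ((z + Complex.I * (s : ℂ))⁻¹
        + Complex.I * ((Real.sign s : ℝ) : ℂ) / ((1 + |s| : ℝ) : ℂ)) / ((|s| : ℝ) : ℂ) := by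
    unfold fint
    field_simp
  rw [key, Complex.div_ofReal_re]
  apply div_nonneg _ (abs_nonneg s)
  rw [Complex.add_re]
  have e1 : (Complex.I * ((Real.sign s : ℝ) : ℂ) / ((1 + |s| : ℝ) : ℂ)).re = 0 := by
    rw [Complex.div_ofReal_re]
    simp [Complex.mul_re]
  rw [e1, add_zero, Complex.inv_re, re_add_I_mul]
  exact div_nonneg hz.le (Complex.normSq_nonneg _)

/-- Given `α, γ ≥ 0`, `β ∈ ℝ` and a nonnegative Borel measure `μ` on
`ℝ ∖ {0}` with `∫ min(|s|⁻¹, (|s| ^ 3)⁻¹) μ(ds) < ∞`, the integral defining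
`F(z) = α z² − i β z + γ + (1/π) ∫ (z/(z+is) + i z sign(s)/(1+|s|)) μ(ds)/|s|`
converges absolutely for every `z` with `Re z > 0`, and `F` is a Rogers function. -/
theorem statement0 (α β γ : ℝ) (hα : 0 ≤ α) (hγ : 0 ≤ γ)
    (μ : Measure ℝ) (hμ0 : μ ({0} : Set ℝ) = 0)
    (hμint : (∫⁻ s : ℝ, ENNReal.ofReal (min |s|⁻¹ (|s| ^ 3)⁻¹) ∂μ) < ⊤) :
    (∀ z : ℂ, 0 < z.re →
      Integrable (fun s : ℝ =>
        (z / (z + Complex.I * (s : ℂ))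
          + Complex.I * z * (Real.sign s : ℂ) / ((1 + |s| : ℝ) : ℂ)) / ((|s| : ℝ) : ℂ)) μ) ∧
    IsRogersFunction (fun z : ℂ =>
      (α : ℂ) * z ^ 2 - Complex.I * (β : ℂ) * z + (γ : ℂ) +
        ((1 / Real.pi : ℝ) : ℂ) *
          ∫ s : ℝ, (z / (z + Complex.I * (s : ℂ))
            + Complex.I * z * (Real.sign s : ℂ) / ((1 + |s| : ℝ) : ℂ)) / ((|s| : ℝ) : ℂ) ∂μ) := by
  have hint : ∀ z : ℂ, 0 < z.re → Integrable (fint z) μ :=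
    fun z hz => integrable_fint μ hμ0 hμint z hz
  refine ⟨fun z hz => hint z hz, ?_, ?_⟩
  · -- differentiability
    have h1 : DifferentiableOn ℂ
        (fun z : ℂ => (α : ℂ) * z ^ 2 - Complex.I * (β : ℂ) * z + (γ : ℂ))
        {z : ℂ | 0 < z.re} := by
      apply Differentiable.differentiableOn
      fun_prop
    have h2 : DifferentiableOn ℂ
        (fun z : ℂ => ((1 / Real.pi : ℝ) : ℂ) * ∫ s, fint z s ∂μ) {z : ℂ | 0 < z.re} :=
      fun z hz => ((diff_integral μ hμ0 hμint) z hz).const_mul _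
    exact h1.add h2
  · -- positivity
    intro z hz
    have hz0 : z ≠ 0 := by intro h; rw [h] at hz; simp at hz
    have hfi : Integrable (fun s => fint z s / z) μ := (hint z hz).div_const z
    have expand : ((α : ℂ) * z ^ 2 - Complex.I * (β : ℂ) * z + (γ : ℂ) +
          ((1 / Real.pi : ℝ) : ℂ) * ∫ s, fint z s ∂μ) / z
        = (α : ℂ) * z + (-(Complex.I * (β : ℂ))) + (γ : ℂ) / z
          + ((1 / Real.pi : ℝ) : ℂ) * ((∫ s, fint z s ∂μ) / z) := by
      field_simp [hz0]
      ring
    show 0 ≤ (((α : ℂ) * z ^ 2 - Complex.I * (β : ℂ) * z + (γ : ℂ) +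
          ((1 / Real.pi : ℝ) : ℂ) * ∫ s, fint z s ∂μ) / z).re
    rw [expand]
    simp only [Complex.add_re]
    have t1 : ((α : ℂ) * z).re = α * z.re := Complex.re_ofReal_mul α z
    have t2 : (-(Complex.I * (β : ℂ))).re = 0 := by
      simp [Complex.mul_re]
    have t3 : 0 ≤ ((γ : ℂ) / z).re := by
      rw [Complex.div_re]
      simp only [Complex.ofReal_re, Complex.ofReal_im, zero_mul, zero_div, add_zero]
      exact div_nonneg (mul_nonneg hγ hz.le) (Complex.normSq_nonneg z)
    have t4 : 0 ≤ (((1 / Real.pi : ℝ) : ℂ) * ((∫ s, fint z s ∂μ) / z)).re := by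
      rw [Complex.re_ofReal_mul]
      apply mul_nonneg (by positivity)
      rw [← integral_div z (fun s => fint z s)]
      have hre := integral_re (μ := μ) (f := fun s => fint z s / z) hfi
      simp only [RCLike.re_to_complex] at hre
      rw [← hre]
      apply integral_nonneg_of_ae
      filter_upwards [ae_ne_zero μ hμ0] with s hs
      exact re_fint_div_nonneg z hz s hs
    rw [t1, t2]
    have : 0 ≤ α * z.re := mul_nonneg hα hz.le
    linarith
end
end

section
/- Let c > 0 and let ϑ : ℝ → [0,π] be a Borel measurable function. Then for every z ∈ ℂ with Re z > 0 the integral ∫_{−∞}^{∞} ( z/(z+is) − 1/(1+|s|) ) (ϑ(s)/|s|) ds converges absolutely, and the function F(z) = c·exp( (1/π) ∫_{−∞}^{∞} ( z/(z+is) − 1/(1+|s|) ) (ϑ(s)/|s|) ds ) is a Rogers function. -/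
open MeasureTheory Filter Set
open scoped ENNReal Topology
open Real Topology Complex Metric

noncomputable section

lemma sqb (x y : ℝ) (hx : 0 < x) (s : ℝ) :
    1 + s^2 ≤ (max ((1+2*y^2)/x^2) 2) * (x^2+(y+s)^2) := by
  have h1 : 1 + 2*y^2 ≤ (max ((1+2*y^2)/x^2) 2) * x^2 := by
    rw [← div_le_iff₀ (by positivity)]; exact le_max_left _ _
  have h2 : (2:ℝ) ≤ max ((1+2*y^2)/x^2) 2 := le_max_right _ _
  nlinarith [sq_nonneg (2*y+s), sq_nonneg (y+s)]

lemma kernel_int (x y : ℝ) (hx : 0 < x) :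
    Integrable (fun s : ℝ => x / (x^2 + (y+s)^2)) := by
  set C := max ((1+2*y^2)/x^2) 2 with hC
  have hC0 : 0 < C := lt_of_lt_of_le two_pos (le_max_right _ _)
  refine (integrable_inv_one_add_sq.const_mul (x*C)).mono' ?_ ?_
  · exact (continuous_const.div (by continuity) (fun s => by positivity)).aestronglyMeasurable
  · refine Eventually.of_forall fun s => ?_
    have h := sqb x y hx s
    have hden : (0:ℝ) < x^2+(y+s)^2 := by positivity
    have h2 : (0:ℝ) < 1 + s^2 := by positivity
    rw [Real.norm_eq_abs, _root_.abs_of_nonneg (by positivity), mul_comm (x*C),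
      ← div_eq_inv_mul, div_le_div_iff₀ hden h2]
    nlinarith [hx.le]

lemma kernel_deriv (x y : ℝ) (hx : 0 < x) (s : ℝ) :
    HasDerivAt (fun s : ℝ => Real.arctan ((y+s)/x)) (x/(x^2+(y+s)^2)) s := by
  have h := (Real.hasDerivAt_arctan ((y+s)/x)).comp s
    (((hasDerivAt_id s).const_add y).div_const x)
  refine h.congr_deriv ?_
  field_simp


lemma kernel_Ioi (x y : ℝ) (hx : 0 < x) :
    ∫ s in Ioi (0:ℝ), x/(x^2+(y+s)^2) = π/2 - Real.arctan (y/x) := by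
  have ht : Tendsto (fun s : ℝ => Real.arctan ((y+s)/x)) atTop (𝓝 (π/2)) := by
    refine (tendsto_nhds_of_tendsto_nhdsWithin Real.tendsto_arctan_atTop).comp ?_
    exact (tendsto_atTop_add_const_left _ y tendsto_id).atTop_div_const hx
  have := integral_Ioi_of_hasDerivAt_of_tendsto' (a := (0:ℝ)) (f := fun s : ℝ => Real.arctan ((y+s)/x))
    (fun s _ => kernel_deriv x y hx s) ((kernel_int x y hx).integrableOn) ht
  simpa using this.trans (by norm_num)

lemma kernel_Iic (x y : ℝ) (hx : 0 < x) :
    ∫ s in Iic (0:ℝ), x/(x^2+(y+s)^2) = Real.arctan (y/x) + π/2 := by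
  have ht : Tendsto (fun s : ℝ => Real.arctan ((y+s)/x)) atBot (𝓝 (-(π/2))) := by
    refine (tendsto_nhds_of_tendsto_nhdsWithin Real.tendsto_arctan_atBot).comp ?_
    exact (tendsto_atBot_add_const_left _ y tendsto_id).atBot_div_const hx
  have := integral_Iic_of_hasDerivAt_of_tendsto' (a := (0:ℝ)) (f := fun s : ℝ => Real.arctan ((y+s)/x))
    (fun s _ => kernel_deriv x y hx s) ((kernel_int x y hx).integrableOn) ht
  simpa using this.trans (by norm_num)

-- abs bound: 1+|s| ≤ 2*C1*|z+I*s| when re z > 0, C1 = max ((1+|z.im|)/z.re) 1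
lemma absb (z : ℂ) (hz : 0 < z.re) (s : ℝ) :
    1 + |s| ≤ 2 * (max ((1+|z.im|)/z.re) 1) * ‖z + Complex.I * s‖ := by
  set C1 := max ((1+|z.im|)/z.re) 1 with hC1
  have hC1' : (1:ℝ) ≤ C1 := le_max_right _ _
  have hre : (z + Complex.I * s).re = z.re := by simp
  have him : (z + Complex.I * s).im = z.im + s := by simp
  have hA1 : z.re ≤ ‖z + Complex.I * s‖ := by
    have := Complex.abs_re_le_norm (z + Complex.I * s); rw [hre] at this
    exact (le_abs_self _).trans this
  have hA2 : |z.im + s| ≤ ‖z + Complex.I * s‖ := by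
    have := Complex.abs_im_le_norm (z + Complex.I * s); rwa [him] at this
  have h1 : 1 + |z.im| ≤ C1 * z.re := by
    rw [← div_le_iff₀ hz]; exact le_max_left _ _
  have hs : |s| ≤ |z.im| + |z.im + s| := by
    have h := abs_sub (z.im + s) z.im
    have e : z.im + s - z.im = s := by ring
    rw [e] at h; linarith
  have hA0 : 0 ≤ ‖z + Complex.I * s‖ := norm_nonneg _
  nlinarith [hA1, hA2]

lemma wne (z : ℂ) (hz : 0 < z.re) (s : ℝ) : z + Complex.I * s ≠ 0 := by
  intro h
  have h2 : (z + Complex.I * s).re = 0 := by rw [h]; simp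
  simp only [Complex.add_re, Complex.mul_re, Complex.I_re, Complex.I_im, Complex.ofReal_re,
    Complex.ofReal_im, zero_mul, one_mul, mul_zero, sub_zero, zero_sub] at h2
  linarith

lemma normb (z : ℂ) (hz : 0 < z.re) (ϑ : ℝ → ℝ) (hrange : ∀ s : ℝ, ϑ s ∈ Icc 0 π) (s : ℝ) :
    ‖(z / (z + Complex.I * (s:ℂ)) - (((1 + |s|)⁻¹ : ℝ) : ℂ)) * ((ϑ s / |s| : ℝ) : ℂ)‖
      ≤ (2 * (max ((1+|z.im|)/z.re) 1) * π * (‖z‖ + 1)) * (1+s^2)⁻¹ := by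
  set C1 := max ((1+|z.im|)/z.re) 1 with hC1
  have hC1' : (1:ℝ) ≤ C1 := le_max_right _ _
  have hπ := Real.pi_pos
  have haz : (0:ℝ) ≤ ‖z‖ := norm_nonneg z
  rcases eq_or_ne s 0 with rfl | hs
  · simp only [abs_zero, div_zero, Complex.ofReal_zero, mul_zero, norm_zero]
    positivity
  · have hs0 : 0 < |s| := abs_pos.2 hs
    set w := z + Complex.I * (s:ℂ) with hwdef
    have hw : w ≠ 0 := wne z hz s
    set A := ‖w‖ with hA
    have hA0 : 0 < A := norm_pos_iff.mpr hw
    set d : ℝ := 1 + |s| with hd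
    have hd0 : (0:ℝ) < d := by positivity
    set t : ℝ := ϑ s / |s| with hts
    have ht0 : 0 ≤ t := div_nonneg (hrange s).1 (abs_nonneg s)
    have hts' : t * |s| ≤ π := by
      rw [hts, div_mul_cancel₀ _ hs0.ne']; exact (hrange s).2
    have habs : 1 + |s| ≤ 2 * C1 * A := absb z hz s
    have hiden : (z / w - (((1 + |s|)⁻¹ : ℝ) : ℂ)) * (w * (d:ℂ))
        = z * ((|s| : ℝ):ℂ) - Complex.I * s := by
      have e1 : z / w * (w * (d:ℂ)) = z * (d:ℂ) := by
        field_simp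
      have e2 : (((1 + |s|)⁻¹ : ℝ) : ℂ) * (w * (d:ℂ)) = w := by
        have h3 : (((1 + |s|)⁻¹ : ℝ) : ℂ) * (d:ℂ) = 1 := by
          rw [hd, ← Complex.ofReal_mul, inv_mul_cancel₀ hd0.ne', Complex.ofReal_one]
        rw [mul_comm w, ← mul_assoc, h3, one_mul]
      rw [sub_mul, e1, e2, hwdef, hd]
      push_cast
      ring
    have hQ : ‖z / w - (((1 + |s|)⁻¹ : ℝ) : ℂ)‖ * (A * d)
        ≤ (‖z‖ + 1) * |s| := by
      have h1 : ‖(z / w - (((1 + |s|)⁻¹ : ℝ) : ℂ)) * (w * (d:ℂ))‖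
          = ‖z / w - (((1 + |s|)⁻¹ : ℝ) : ℂ)‖ * (A * d) := by
        rw [norm_mul, norm_mul]
        simp [hA, Complex.norm_real, _root_.abs_of_pos hd0]
      rw [← h1, hiden]
      calc ‖z * ((|s| : ℝ):ℂ) - Complex.I * s‖
          ≤ ‖z * ((|s| : ℝ):ℂ)‖ + ‖Complex.I * (s:ℂ)‖ := norm_sub_le _ _
        _ = ‖z‖ * |s| + |s| := by
            simp [Complex.norm_real, _root_.abs_abs]
        _ = (‖z‖ + 1) * |s| := by ring
    rw [norm_mul]
    have hnt : ‖((t:ℝ) : ℂ)‖ = t := by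
      simp [Complex.norm_real, _root_.abs_of_nonneg ht0]
    rw [hnt]
    have step1 : ‖z / w - (((1 + |s|)⁻¹ : ℝ) : ℂ)‖ * t
        ≤ π * (‖z‖ + 1) / (A * d) := by
      rw [le_div_iff₀ (by positivity)]
      have hnn : 0 ≤ ‖z / w - (((1 + |s|)⁻¹ : ℝ) : ℂ)‖ := norm_nonneg _
      nlinarith [mul_le_mul_of_nonneg_right hQ ht0]
    refine step1.trans ?_
    have heq : (2 * C1 * π * (‖z‖ + 1)) * (1+s^2)⁻¹
        = (2 * C1 * π * (‖z‖ + 1)) / (1+s^2) := by rw [div_eq_mul_inv]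
    rw [heq, div_le_div_iff₀ (by positivity) (by positivity)]
    have hsq : 1 + s^2 ≤ 2 * C1 * A * d := by
      nlinarith [mul_le_mul_of_nonneg_right habs hd0.le, _root_.sq_abs s, hs0]
    nlinarith [mul_le_mul_of_nonneg_left hsq (by positivity : (0:ℝ) ≤ π * (‖z‖ + 1))]

lemma meas_main (z : ℂ) (hz : 0 < z.re) (ϑ : ℝ → ℝ) (hmeas : Measurable ϑ) :
    AEStronglyMeasurable (fun s : ℝ =>
      (z / (z + Complex.I * (s:ℂ)) - (((1 + |s|)⁻¹ : ℝ) : ℂ)) * ((ϑ s / |s| : ℝ) : ℂ)) volume := by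
  refine AEStronglyMeasurable.mul ?_ ?_
  · refine Continuous.aestronglyMeasurable ?_
    refine Continuous.sub ?_ ?_
    · exact continuous_const.div (by continuity) (fun s => wne z hz s)
    · exact Complex.continuous_ofReal.comp
        ((continuous_const.add _root_.continuous_abs).inv₀ (fun s => by simp only [Pi.add_apply]; positivity))
  · exact (Complex.measurable_ofReal.comp (hmeas.div _root_.continuous_abs.measurable)).aestronglyMeasurable

lemma integrable_main (z : ℂ) (hz : 0 < z.re) (ϑ : ℝ → ℝ) (hmeas : Measurable ϑ)
    (hrange : ∀ s : ℝ, ϑ s ∈ Icc 0 π) :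
    Integrable (fun s : ℝ =>
      (z / (z + Complex.I * (s:ℂ)) - (((1 + |s|)⁻¹ : ℝ) : ℂ)) * ((ϑ s / |s| : ℝ) : ℂ)) := by
  refine (integrable_inv_one_add_sq.const_mul
    (2 * (max ((1+|z.im|)/z.re) 1) * π * (‖z‖ + 1))).mono'
    (meas_main z hz ϑ hmeas) ?_
  exact Eventually.of_forall (normb z hz ϑ hrange)

lemma normSq_aux (z : ℂ) (s : ℝ) :
    ‖z + Complex.I * s‖ ^ 2 = z.re^2 + (z.im + s)^2 := by
  rw [Complex.sq_norm, Complex.normSq_apply]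
  simp
  ring

lemma hasDerivAt_G (z₀ : ℂ) (hz₀ : 0 < z₀.re) (ϑ : ℝ → ℝ) (hmeas : Measurable ϑ)
    (hrange : ∀ s : ℝ, ϑ s ∈ Icc 0 π) :
    HasDerivAt (fun z : ℂ => ∫ s : ℝ,
      (z / (z + Complex.I * (s:ℂ)) - (((1 + |s|)⁻¹ : ℝ) : ℂ)) * ((ϑ s / |s| : ℝ) : ℂ))
      (∫ s : ℝ, Complex.I * s / (z₀ + Complex.I * s)^2 * ((ϑ s / |s| : ℝ) : ℂ)) z₀ := by
  set C2 := max ((1+2*z₀.im^2)/z₀.re^2) 2 with hC2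
  have hC2' : (2:ℝ) ≤ C2 := le_max_right _ _
  have hπ := Real.pi_pos
  have hmain := hasDerivAt_integral_of_dominated_loc_of_deriv_le (μ := volume)
    (F := fun (z : ℂ) (s : ℝ) =>
      (z / (z + Complex.I * (s:ℂ)) - (((1 + |s|)⁻¹ : ℝ) : ℂ)) * ((ϑ s / |s| : ℝ) : ℂ))
    (F' := fun (z : ℂ) (s : ℝ) => Complex.I * s / (z + Complex.I * s)^2 * ((ϑ s / |s| : ℝ) : ℂ))
    (x₀ := z₀) (bound := fun s => (16/9) * C2 * π * (1+s^2)⁻¹)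
    (s := ball z₀ (z₀.re/4)) (ball_mem_nhds _ (by positivity)) ?_ ?_ ?_ ?_ ?_ ?_
  · exact hmain.2
  · -- measurability near z₀
    have hopen : ∀ᶠ z in 𝓝 z₀, 0 < z.re :=
      (isOpen_lt continuous_const Complex.continuous_re).eventually_mem hz₀
    exact hopen.mono fun z hz => meas_main z hz ϑ hmeas
  · exact integrable_main z₀ hz₀ ϑ hmeas hrange
  · refine AEStronglyMeasurable.mul ?_ ?_
    · refine Continuous.aestronglyMeasurable ?_
      exact (continuous_const.mul Complex.continuous_ofReal).div (by continuity)
        (fun s => pow_ne_zero 2 (wne z₀ hz₀ s))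
    · exact (Complex.measurable_ofReal.comp
        (hmeas.div _root_.continuous_abs.measurable)).aestronglyMeasurable
  · -- bound
    refine Eventually.of_forall fun s => fun z hzball => ?_
    have hA0' : z₀.re ≤ ‖z₀ + Complex.I * s‖ := by
      have hre : (z₀ + Complex.I * (s:ℂ)).re = z₀.re := by simp
      calc z₀.re ≤ |z₀.re| := le_abs_self _
        _ = |(z₀ + Complex.I * (s:ℂ)).re| := by rw [hre]
        _ ≤ _ := Complex.abs_re_le_norm _
    have hdist : ‖z - z₀‖ < z₀.re/4 := by
      rw [mem_ball, Complex.dist_eq] at hzball; exact hzball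
    have hAA : (3/4) * ‖z₀ + Complex.I * s‖ ≤ ‖z + Complex.I * s‖ := by
      have h1 : ‖z₀ + Complex.I * s‖
          ≤ ‖z + Complex.I * s‖ + ‖z₀ - z‖ := by
        have h2 := norm_add_le (z + Complex.I * (s:ℂ)) (z₀ - z)
        have he : (z + Complex.I * (s:ℂ)) + (z₀ - z) = z₀ + Complex.I * (s:ℂ) := by ring
        rwa [he] at h2
      have hswap : ‖z₀ - z‖ = ‖z - z₀‖ := by
        rw [← norm_neg (z₀ - z)]; ring_nf
      nlinarith [hA0', hdist]
    have hApos : 0 < ‖z + Complex.I * s‖ := by nlinarith [hA0', hdist, hz₀]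
    set t : ℝ := ϑ s / |s| with hts
    have ht0 : 0 ≤ t := div_nonneg (hrange s).1 (abs_nonneg s)
    have hnorm : ‖Complex.I * s / (z + Complex.I * s)^2 * ((t:ℝ) : ℂ)‖
        = |s| * t / ‖z + Complex.I * s‖^2 := by
      rw [norm_mul, norm_div, norm_pow]
      simp [Complex.norm_real, _root_.abs_of_nonneg ht0]
      ring
    rw [hnorm]
    have hst : |s| * t ≤ π := by
      rcases eq_or_ne s 0 with rfl | hs
      · simp [hts]; positivity
      · rw [hts, mul_comm, div_mul_cancel₀ _ (abs_pos.2 hs).ne']; exact (hrange s).2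
    have hsq : 1 + s^2 ≤ C2 * (z₀.re^2 + (z₀.im+s)^2) := sqb z₀.re z₀.im hz₀ s
    have hA2 : (9/16) * (z₀.re^2 + (z₀.im+s)^2) ≤ ‖z + Complex.I * s‖^2 := by
      have := normSq_aux z₀ s
      nlinarith [hAA, norm_nonneg (z₀ + Complex.I * s)]
    show |s| * t / ‖z + Complex.I * s‖^2 ≤ (16/9) * C2 * π * (1+s^2)⁻¹
    have heq : (16/9) * C2 * π * (1+s^2)⁻¹ = ((16/9) * C2 * π) / (1+s^2) := by
      ring
    rw [heq, div_le_div_iff₀ (by positivity) (by positivity)]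
    have hC2pos : (0:ℝ) < C2 := lt_of_lt_of_le two_pos hC2'
    nlinarith [mul_le_mul_of_nonneg_left hA2 (by positivity : (0:ℝ) ≤ (16/9) * C2 * π),
      mul_le_mul_of_nonneg_left hsq (by positivity : (0:ℝ) ≤ π),
      mul_le_mul_of_nonneg_right hst (by positivity : (0:ℝ) ≤ 1+s^2)]
  · exact (integrable_inv_one_add_sq.const_mul ((16/9) * C2 * π))
  · -- differentiability
    refine Eventually.of_forall fun s => fun z hzball => ?_
    have hdist : ‖z - z₀‖ < z₀.re/4 := by
      rw [mem_ball, Complex.dist_eq] at hzball; exact hzball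
    have hzre : 0 < z.re := by
      have h1 : |(z - z₀).re| ≤ ‖z - z₀‖ := Complex.abs_re_le_norm _
      have h2 : (z - z₀).re = z.re - z₀.re := by simp
      rw [h2] at h1
      have := abs_le.1 h1
      linarith [this.1]
    have hw : z + Complex.I * s ≠ 0 := wne z hzre s
    have h1 : HasDerivAt (fun z : ℂ => z / (z + Complex.I * s))
        (Complex.I * s / (z + Complex.I * s)^2) z := by
      have h := (hasDerivAt_id z).div ((hasDerivAt_id z).add_const (Complex.I * s)) hw
      refine h.congr_deriv ?_
      simp only [id, one_mul, mul_one]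
      field_simp
      ring
    exact (h1.sub_const _).mul_const _

lemma im_formula (z : ℂ) (hz : 0 < z.re) (ϑ : ℝ → ℝ) (s : ℝ) :
    ((z / (z + Complex.I * (s:ℂ)) - (((1 + |s|)⁻¹ : ℝ) : ℂ)) * ((ϑ s / |s| : ℝ) : ℂ)).im
      = (ϑ s / |s|) * (-(z.re * s) / (z.re^2 + (z.im+s)^2)) := by
  have hN : z.re^2 + (z.im+s)^2 ≠ 0 := by positivity
  have hnz : Complex.normSq (z + Complex.I * s) = z.re^2 + (z.im+s)^2 := by
    rw [Complex.normSq_apply]; simp; ring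
  rw [Complex.mul_im, Complex.sub_im, Complex.sub_re, Complex.div_im, hnz]
  simp only [Complex.ofReal_im, Complex.ofReal_re, Complex.add_re, Complex.add_im,
    Complex.mul_re, Complex.mul_im, Complex.I_re, Complex.I_im]
  field_simp
  ring

lemma im_bounds (z : ℂ) (hz : 0 < z.re) (ϑ : ℝ → ℝ) (hmeas : Measurable ϑ)
    (hrange : ∀ s : ℝ, ϑ s ∈ Icc 0 π) :
    -(π * (π/2 - Real.arctan (z.im/z.re))) ≤
      (∫ s : ℝ, (z / (z + Complex.I * (s:ℂ)) - (((1 + |s|)⁻¹ : ℝ) : ℂ)) * ((ϑ s / |s| : ℝ) : ℂ)).im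
    ∧ (∫ s : ℝ, (z / (z + Complex.I * (s:ℂ)) - (((1 + |s|)⁻¹ : ℝ) : ℂ)) * ((ϑ s / |s| : ℝ) : ℂ)).im
      ≤ π * (Real.arctan (z.im/z.re) + π/2) := by
  have hπ := Real.pi_pos
  set x := z.re with hx
  set y := z.im with hy
  set f : ℝ → ℝ := fun s => (ϑ s / |s|) * (-(x * s) / (x^2 + (y+s)^2)) with hf
  have hint := (integrable_main z hz ϑ hmeas hrange).im
  have hfeq : (fun s : ℝ => ((z / (z + Complex.I * (s:ℂ)) - (((1 + |s|)⁻¹ : ℝ) : ℂ))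
      * ((ϑ s / |s| : ℝ) : ℂ)).im) = f := funext fun s => im_formula z hz ϑ s
  have him := integral_im (μ := volume) (integrable_main z hz ϑ hmeas hrange)
  simp only [RCLike.im_to_complex] at him
  rw [← him, hfeq]
  simp only [RCLike.im_to_complex] at hint
  rw [hfeq] at hint
  have hK := kernel_int x y hz
  have hsplit : ∫ s : ℝ, f s = (∫ s in Iic (0:ℝ), f s) + ∫ s in Ioi (0:ℝ), f s :=
    (intervalIntegral.integral_Iic_add_Ioi hint.integrableOn hint.integrableOn).symm
  have hNpos : ∀ s : ℝ, 0 < x^2 + (y+s)^2 := fun s => by positivity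
  -- pointwise bounds
  have hb1 : ∀ s ∈ Iic (0:ℝ), f s ≤ π * (x / (x^2 + (y+s)^2)) := by
    intro s hs
    rcases eq_or_lt_of_le (mem_Iic.1 hs) with rfl | hs'
    · simp [hf]; positivity
    · have he : f s = ϑ s * (x / (x^2 + (y+s)^2)) := by
        rw [hf]; simp only; rw [abs_of_neg hs']
        field_simp [hs'.ne, (hNpos s).ne']
      rw [he, mul_le_mul_iff_of_pos_right (by positivity)]
      exact (hrange s).2
  have hb2 : ∀ s ∈ Iic (0:ℝ), 0 ≤ f s := by
    intro s hs
    have : 0 ≤ -(x * s) := by nlinarith [mem_Iic.1 hs]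
    exact mul_nonneg (div_nonneg (hrange s).1 (abs_nonneg s))
      (div_nonneg this (hNpos s).le)
  have hb3 : ∀ s ∈ Ioi (0:ℝ), -(π * (x / (x^2 + (y+s)^2))) ≤ f s := by
    intro s hs
    have hs' : 0 < s := mem_Ioi.1 hs
    have he : f s = -(ϑ s * (x / (x^2 + (y+s)^2))) := by
      rw [hf]; simp only; rw [abs_of_pos hs']
      field_simp [hs'.ne', (hNpos s).ne']
    rw [he, neg_le_neg_iff, mul_le_mul_iff_of_pos_right (by positivity)]
    exact (hrange s).2
  have hb4 : ∀ s ∈ Ioi (0:ℝ), f s ≤ 0 := by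
    intro s hs
    have h1 : -(x * s) ≤ 0 := by nlinarith [mem_Ioi.1 hs]
    exact mul_nonpos_of_nonneg_of_nonpos (div_nonneg (hrange s).1 (abs_nonneg s))
      (div_nonpos_of_nonpos_of_nonneg h1 (hNpos s).le)
  -- set integral values
  have hvIic : ∫ s in Iic (0:ℝ), π * (x / (x^2 + (y+s)^2)) = π * (Real.arctan (y/x) + π/2) := by
    rw [integral_const_mul, kernel_Iic x y hz]
  have hvIoi : ∫ s in Ioi (0:ℝ), -(π * (x / (x^2 + (y+s)^2))) = -(π * (π/2 - Real.arctan (y/x))) := by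
    rw [integral_neg, integral_const_mul, kernel_Ioi x y hz]
  constructor
  · rw [hsplit]
    have h1 : (0:ℝ) ≤ ∫ s in Iic (0:ℝ), f s :=
      setIntegral_nonneg measurableSet_Iic hb2
    have h2 : -(π * (π/2 - Real.arctan (y/x))) ≤ ∫ s in Ioi (0:ℝ), f s := by
      rw [← hvIoi]
      exact setIntegral_mono_on (((hK.const_mul π).neg).integrableOn) hint.integrableOn
        measurableSet_Ioi hb3
    linarith
  · rw [hsplit]
    have h1 : ∫ s in Iic (0:ℝ), f s ≤ π * (Real.arctan (y/x) + π/2) := by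
      rw [← hvIic]
      exact setIntegral_mono_on hint.integrableOn ((hK.const_mul π).integrableOn)
        measurableSet_Iic hb1
    have h2 : (∫ s in Ioi (0:ℝ), f s) ≤ 0 :=
      setIntegral_nonpos measurableSet_Ioi hb4
    linarith

lemma arg_eq_arctan' (z : ℂ) (hz : 0 < z.re) : Complex.arg z = Real.arctan (z.im / z.re) := by
  have h := Complex.tan_arg z
  have habs : |Complex.arg z| < π/2 := Complex.abs_arg_lt_pi_div_two_iff.2 (Or.inl hz)
  rw [← h]
  exact (Real.arctan_tan (by linarith [(abs_lt.1 habs).1]) (by linarith [(abs_lt.1 habs).2])).symm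

/-- For `c > 0` and a Borel function `ϑ : ℝ → [0, π]`, the integral
`∫ (z/(z+is) − 1/(1+|s|)) (ϑ(s)/|s|) ds` converges absolutely for every `z` with
`Re z > 0`, and `F(z) = c exp((1/π) ∫ (z/(z+is) − 1/(1+|s|)) (ϑ(s)/|s|) ds)` is a
Rogers function. -/
theorem statement2 (c : ℝ) (hc : 0 < c) (ϑ : ℝ → ℝ) (hmeas : Measurable ϑ)
    (hrange : ∀ s : ℝ, ϑ s ∈ Set.Icc 0 Real.pi) :
    (∀ z : ℂ, 0 < z.re →
      Integrable (fun s : ℝ =>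
        (z / (z + Complex.I * (s : ℂ)) - (((1 + |s|)⁻¹ : ℝ) : ℂ)) * ((ϑ s / |s| : ℝ) : ℂ))) ∧
    IsRogersFunction (fun z : ℂ =>
      (c : ℂ) * Complex.exp (((1 / Real.pi : ℝ) : ℂ) *
        ∫ s : ℝ, (z / (z + Complex.I * (s : ℂ)) - (((1 + |s|)⁻¹ : ℝ) : ℂ))
          * ((ϑ s / |s| : ℝ) : ℂ))) := by
  have hπ := Real.pi_pos
  refine ⟨fun z hz => integrable_main z hz ϑ hmeas hrange, ?_, ?_⟩
  · -- differentiability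
    intro z hz
    have h1 := (hasDerivAt_G z hz ϑ hmeas hrange).differentiableAt
    exact (((h1.const_mul (((1/Real.pi : ℝ) : ℂ))).cexp).const_mul (c:ℂ)).differentiableWithinAt
  · intro z hz
    have hz0 : z ≠ 0 := fun h => by simp [h] at hz
    show 0 ≤ ((c:ℂ) * Complex.exp (((1 / Real.pi : ℝ) : ℂ) *
        ∫ s : ℝ, (z / (z + Complex.I * (s : ℂ)) - (((1 + |s|)⁻¹ : ℝ) : ℂ))
          * ((ϑ s / |s| : ℝ) : ℂ)) / z).re
    set G := ∫ s : ℝ, (z / (z + Complex.I * (s : ℂ)) - (((1 + |s|)⁻¹ : ℝ) : ℂ))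
          * ((ϑ s / |s| : ℝ) : ℂ) with hG
    have key : (c:ℂ) * Complex.exp (((1/Real.pi : ℝ):ℂ) * G) / z
        = (c:ℂ) * Complex.exp (((1/Real.pi : ℝ):ℂ) * G - Complex.log z) := by
      rw [Complex.exp_sub, Complex.exp_log hz0, mul_div_assoc]
    rw [key]
    set u := ((1/Real.pi : ℝ):ℂ) * G - Complex.log z with hu
    have hre : ((c:ℂ) * Complex.exp u).re = c * (Complex.exp u).re := by
      simp [Complex.mul_re]
    rw [hre, Complex.exp_re]
    have hium : u.im = (1/Real.pi) * G.im - Real.arctan (z.im/z.re) := by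
      rw [hu]
      simp [Complex.sub_im, Complex.mul_im, Complex.log_im, arg_eq_arctan' z hz]
    obtain ⟨hL, hU⟩ := im_bounds z hz ϑ hmeas hrange
    rw [← hG] at hL hU
    have hπ' : (1/Real.pi) * Real.pi = 1 := by field_simp
    set a := Real.arctan (z.im/z.re) with ha
    have h1 : u.im ≤ π/2 := by
      rw [hium]
      have hmul := mul_le_mul_of_nonneg_left hU (by positivity : (0:ℝ) ≤ 1/Real.pi)
      have e : (1/Real.pi) * (π * (a + π/2)) = a + π/2 := by field_simp
      linarith [e ▸ hmul]
    have h2 : -(π/2) ≤ u.im := by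
      rw [hium]
      have hmul := mul_le_mul_of_nonneg_left hL (by positivity : (0:ℝ) ≤ 1/Real.pi)
      have e : (1/Real.pi) * (-(π * (π/2 - a))) = -(π/2 - a) := by field_simp
      linarith [e ▸ hmul]
    have hcos : 0 ≤ Real.cos u.im := Real.cos_nonneg_of_mem_Icc ⟨h2, h1⟩
    exact mul_nonneg hc.le (mul_nonneg (Real.exp_nonneg _) hcos)
end
end
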